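/- Let G₁ and G₂ be disjoint finite simple graphs with vertices s₁ ∈ G₁ and s₂ ∈ G₂, and let G₁ ⊔ G₂ denote their disjoint union. Then the Grundy value of Two-Token Undirected Geography on G₁ ⊔ G₂ with tokens on s₁ and s₂ equals g(G₁,s₁) XOR g(G₂,s₂), where XOR is bitwise exclusive-or of natural numbers. -/

import Mathlib

noncomputable def mex (s : Finset ℕ) : ℕ := sInf {n : ℕ | n ∉ s}

noncomputable def geo {V : Type} [DecidableEq V] (G : SimpleGraph V) [DecidableRel G.Adj]
    (A : Finset V) (s : V) : ℕ :=
  if h : s ∈ A then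
    mex (((A.erase s).filter (fun v => G.Adj s v)).image (fun v => geo G (A.erase s) v))
  else 0
termination_by A.card
decreasing_by
  simp_wf
  exact Finset.card_erase_lt_of_mem h

/-- The disjoint union `G ⊔ H` of two simple graphs. -/
def sumGraph {V W : Type} (G : SimpleGraph V) (H : SimpleGraph W) :
    SimpleGraph (V ⊕ W) where
  Adj x y :=
    match x, y with
    | Sum.inl a, Sum.inl b => G.Adj a b
    | Sum.inr a, Sum.inr b => H.Adj a b
    | _, _ => False
  symm := by
    constructor
    intro x y h
    match x, y with
    | Sum.inl a, Sum.inl b => exact G.symm.symm _ _ h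
    | Sum.inr a, Sum.inr b => exact H.symm.symm _ _ h
  loopless := by
    constructor
    intro x h
    match x with
    | Sum.inl a => exact G.loopless.irrefl a h
    | Sum.inr a => exact H.loopless.irrefl a h

instance {V W : Type} (G : SimpleGraph V) [DecidableRel G.Adj]
    (H : SimpleGraph W) [DecidableRel H.Adj] : DecidableRel (sumGraph G H).Adj :=
  fun x y =>
    match x, y with
    | Sum.inl a, Sum.inl b => inferInstanceAs (Decidable (G.Adj a b))
    | Sum.inr a, Sum.inr b => inferInstanceAs (Decidable (H.Adj a b))
    | Sum.inl _, Sum.inr _ => inferInstanceAs (Decidable False)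
    | Sum.inr _, Sum.inl _ => inferInstanceAs (Decidable False)

/-- The Grundy value of Two-Token Undirected Geography on the graph `G`: `A` is the set
of remaining vertices and the two tokens are on `u₁` and `u₂`; a move picks a token, say
on `u`, and a neighbor `w` of `u` in `A` not occupied by the other token, moves that
token to `w` and deletes `u`.  Terminal positions have value `0`. -/
noncomputable def geo2 {V : Type} [DecidableEq V] (G : SimpleGraph V)
    [DecidableRel G.Adj] (A : Finset V) (u₁ u₂ : V) : ℕ :=
  if h : u₁ ∈ A ∧ u₂ ∈ A then
    mex ((((A.erase u₁).filter (fun w => G.Adj u₁ w ∧ w ≠ u₂)).image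
          (fun w => geo2 G (A.erase u₁) w u₂)) ∪
         (((A.erase u₂).filter (fun w => G.Adj u₂ w ∧ w ≠ u₁)).image
          (fun w => geo2 G (A.erase u₂) w u₁)))
  else 0
termination_by A.card
decreasing_by
  · exact Finset.card_erase_lt_of_mem h.1
  · exact Finset.card_erase_lt_of_mem h.2

/-!
On a disjoint union the tokens sit in different components, so neither ever blocks the other
and a move of one token leaves the other component untouched: the two-token game is the
disjunctive sum of the two one-token games. By induction on the number of remaining vertices,
the options of the position have values `x' ^^^ y` and `x ^^^ y'`, where `x = mex S` and
`y = mex T` are the one-token values and `x' ∈ S`, `y' ∈ T` their option values; the mex of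
this set is `x ^^^ y`, because every smaller `m` satisfies `m ^^^ y < x` or `m ^^^ x < y`.
-/

open Finset

section Mex

lemma mex_notMem (s : Finset ℕ) : mex s ∉ s :=
  Nat.sInf_mem (s.finite_toSet.infinite_compl).nonempty

lemma mem_of_lt_mex {s : Finset ℕ} {n : ℕ} (h : n < mex s) : n ∈ s := by
  by_contra hn
  exact (Nat.sInf_le hn).not_gt h

lemma mex_eq_of_notMem_of_forall_lt_mem {s : Finset ℕ} {n : ℕ} (hn : n ∉ s)
    (h : ∀ m < n, m ∈ s) : mex s = n := by
  refine le_antisymm (Nat.sInf_le hn) (not_lt.1 fun hlt => ?_)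
  exact mex_notMem s (h _ hlt)

lemma mex_image_xor_union (S T : Finset ℕ) :
    mex ((S.image (· ^^^ mex T)) ∪ (T.image (mex S ^^^ ·))) = mex S ^^^ mex T := by
  apply mex_eq_of_notMem_of_forall_lt_mem
  · simp only [mem_union, mem_image, Nat.xor_left_inj, Nat.xor_right_inj, not_or, not_exists,
      not_and]
    exact ⟨fun a ha hEq => mex_notMem S (hEq ▸ ha), fun b hb hEq => mex_notMem T (hEq ▸ hb)⟩
  · intro m hm
    rcases Nat.lt_xor_cases hm with h | h
    · exact mem_union_left _ (mem_image.2 ⟨m ^^^ mex T, mem_of_lt_mex h, xor_cancel_right _ _⟩)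
    · exact mem_union_right _ (mem_image.2
        ⟨mex S ^^^ m, mem_of_lt_mex (Nat.xor_comm m _ ▸ h), xor_cancel_left _ _⟩)

end Mex

section Geography

variable {V : Type} [DecidableEq V]

lemma geo_of_mem (G : SimpleGraph V) [DecidableRel G.Adj] {A : Finset V} {s : V} (hs : s ∈ A) :
    geo G A s = mex (((A.erase s).filter (G.Adj s)).image (geo G (A.erase s))) := by
  rw [geo, dif_pos hs]

lemma geo2_of_mem (G : SimpleGraph V) [DecidableRel G.Adj] {A : Finset V} {u₁ u₂ : V}
    (h₁ : u₁ ∈ A) (h₂ : u₂ ∈ A) :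
    geo2 G A u₁ u₂ =
      mex ((((A.erase u₁).filter (fun w => G.Adj u₁ w ∧ w ≠ u₂)).image
            (geo2 G (A.erase u₁) · u₂)) ∪
           (((A.erase u₂).filter (fun w => G.Adj u₂ w ∧ w ≠ u₁)).image
            (geo2 G (A.erase u₂) · u₁))) := by
  rw [geo2, dif_pos ⟨h₁, h₂⟩]

lemma geo2_comm (G : SimpleGraph V) [DecidableRel G.Adj] (A : Finset V) (u v : V) :
    geo2 G A u v = geo2 G A v u := by
  by_cases h : u ∈ A ∧ v ∈ A
  · rw [geo2_of_mem G h.1 h.2, geo2_of_mem G h.2 h.1, union_comm]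
  · rw [geo2, geo2, dif_neg h, dif_neg (h ∘ And.symm)]

end Geography

section SumGraph

variable {V W : Type} (G : SimpleGraph V) (H : SimpleGraph W)

@[simp] lemma sumGraph_adj_inl_inl (a b : V) : (sumGraph G H).Adj (.inl a) (.inl b) ↔ G.Adj a b :=
  Iff.rfl

@[simp] lemma sumGraph_adj_inr_inr (a b : W) : (sumGraph G H).Adj (.inr a) (.inr b) ↔ H.Adj a b :=
  Iff.rfl

@[simp] lemma not_sumGraph_adj_inl_inr (a : V) (b : W) : ¬(sumGraph G H).Adj (.inl a) (.inr b) :=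
  id

@[simp] lemma not_sumGraph_adj_inr_inl (a : W) (b : V) : ¬(sumGraph G H).Adj (.inr a) (.inl b) :=
  id

end SumGraph

section DisjSum

variable {V W : Type} [DecidableEq V] [DecidableEq W]

lemma Finset.disjSum_erase_inl (A : Finset V) (B : Finset W) (a : V) :
    (A.disjSum B).erase (.inl a) = (A.erase a).disjSum B := by
  ext (x | x) <;> simp

lemma Finset.disjSum_erase_inr (A : Finset V) (B : Finset W) (b : W) :
    (A.disjSum B).erase (.inr b) = A.disjSum (B.erase b) := by
  ext (x | x) <;> simp

variable (G : SimpleGraph V) (H : SimpleGraph W) [DecidableRel G.Adj] [DecidableRel H.Adj]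

lemma filter_sumGraph_adj_inl (A : Finset V) (B : Finset W) (a : V) (b : W) :
    (A.disjSum B).filter (fun w => (sumGraph G H).Adj (.inl a) w ∧ w ≠ .inr b) =
      (A.filter (G.Adj a)).map .inl := by
  ext (x | x) <;> simp

lemma filter_sumGraph_adj_inr (A : Finset V) (B : Finset W) (a : V) (b : W) :
    (A.disjSum B).filter (fun w => (sumGraph G H).Adj (.inr b) w ∧ w ≠ .inl a) =
      (B.filter (H.Adj b)).map .inr := by
  ext (x | x) <;> simp

end DisjSum

theorem geo2_sumGraph {V W : Type} [DecidableEq V] [DecidableEq W]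
    (G : SimpleGraph V) [DecidableRel G.Adj] (H : SimpleGraph W) [DecidableRel H.Adj]
    {A : Finset V} {B : Finset W} {a : V} {b : W} (ha : a ∈ A) (hb : b ∈ B) :
    geo2 (sumGraph G H) (A.disjSum B) (.inl a) (.inr b) = geo G A a ^^^ geo H B b := by
  have hleft : ∀ v ∈ (A.erase a).filter (G.Adj a),
      geo2 (sumGraph G H) ((A.erase a).disjSum B) (.inl v) (.inr b) =
        geo G (A.erase a) v ^^^ geo H B b := fun v hv =>
    geo2_sumGraph G H (mem_filter.1 hv).1 hb
  have hright : ∀ v ∈ (B.erase b).filter (H.Adj b),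
      geo2 (sumGraph G H) (A.disjSum (B.erase b)) (.inr v) (.inl a) =
        geo G A a ^^^ geo H (B.erase b) v := fun v hv => by
    rw [geo2_comm]
    exact geo2_sumGraph G H ha (mem_filter.1 hv).1
  rw [geo2_of_mem _ (inl_mem_disjSum.2 ha) (inr_mem_disjSum.2 hb), disjSum_erase_inl,
    disjSum_erase_inr, filter_sumGraph_adj_inl, filter_sumGraph_adj_inr]
  simp only [map_eq_image, image_image, Function.comp_def, Function.Embedding.inl_apply,
    Function.Embedding.inr_apply]
  rw [image_congr hleft, image_congr hright]
  have hxor := mex_image_xor_union (((A.erase a).filter (G.Adj a)).image (geo G (A.erase a)))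
    (((B.erase b).filter (H.Adj b)).image (geo H (B.erase b)))
  rw [← geo_of_mem G ha, ← geo_of_mem H hb, image_image, image_image] at hxor
  exact hxor
termination_by A.card + B.card
decreasing_by
  · have := card_erase_lt_of_mem ha; omega
  · have := card_erase_lt_of_mem hb; omega

/-- for disjoint graphs `G₁`, `G₂` with `s₁ ∈ G₁`, `s₂ ∈ G₂`, the Grundy
value of Two-Token Undirected Geography on `G₁ ⊔ G₂` with tokens on `s₁` and `s₂` equals
`g(G₁,s₁) XOR g(G₂,s₂)`. -/
theorem stmt11 {V W : Type} [Fintype V] [DecidableEq V] [Fintype W] [DecidableEq W]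
    (G₁ : SimpleGraph V) [DecidableRel G₁.Adj]
    (G₂ : SimpleGraph W) [DecidableRel G₂.Adj] (s₁ : V) (s₂ : W) :
    geo2 (sumGraph G₁ G₂) Finset.univ (Sum.inl s₁) (Sum.inr s₂) =
      (geo G₁ Finset.univ s₁) ^^^ (geo G₂ Finset.univ s₂) := by
  rw [← univ_disjSum_univ]
  exact geo2_sumGraph G₁ G₂ (mem_univ s₁) (mem_univ s₂)
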